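/- Suppose {a_j} is a positive, decreasing sequence with the property that there are positive constants c_1, c_2 and λ < 1 such that c_1 λ^j ≤ a_j ≤ c_2 λ^j for all j. Then every E ∈ 𝒞_a satisfies dim_A E = 0. -/

import Mathlib

open scoped BigOperators
open Set

/-- `coverNum r F` is the minimal number of closed balls of radius `r`
needed to cover `F`. -/
noncomputable def coverNum (r : ℝ) (F : Set ℝ) : ℕ :=
  sInf {n : ℕ | ∃ S : Finset ℝ, S.card = n ∧ F ⊆ ⋃ x ∈ S, Metric.closedBall x r}

/-- The Assouad dimension of a set `F ⊆ ℝ`. -/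
noncomputable def dimA (F : Set ℝ) : ℝ :=
  sInf {α : ℝ | ∃ c > (0 : ℝ), ∃ ρ > (0 : ℝ), ∀ x ∈ F, ∀ r R : ℝ,
    0 < r → r < R → R < ρ →
    (coverNum r (Metric.closedBall x R ∩ F) : ℝ) ≤ c * (R / r) ^ α}

/-- The Lower Assouad dimension of a set `F ⊆ ℝ`. -/
noncomputable def dimL (F : Set ℝ) : ℝ :=
  sSup {α : ℝ | ∃ c > (0 : ℝ), ∃ ρ > (0 : ℝ), ∀ x ∈ F, ∀ r R : ℝ,
    0 < r → r < R → R < ρ →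
    c * (R / r) ^ α ≤ (coverNum r (Metric.closedBall x R ∩ F) : ℝ)}

/-- `E` is a complementary set of the (positive, summable) sequence `a`,
i.e. `E ∈ 𝒞_a`:  `E = [0, L] \ ⋃ U n` where the `U n` are disjoint open
intervals in `[0, L]` with `U n` of length `a n`, and `L = ∑ a`. -/
def IsComplementarySet (a : ℕ → ℝ) (E : Set ℝ) : Prop :=
  ∃ U : ℕ → Set ℝ,
    (∀ n, ∃ p q : ℝ, p < q ∧ q - p = a n ∧ U n = Set.Ioo p q) ∧
    (∀ n, U n ⊆ Set.Icc 0 (∑' i, a i)) ∧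
    Pairwise (Function.onFun Disjoint U) ∧
    E = Set.Icc 0 (∑' i, a i) \ ⋃ n, U n

/-- The decreasing complementary set `D_a = {∑_{i ≥ k} a i : k} ∪ {0}`,
obtained by placing the gaps in order from right to left starting at `L`. -/
noncomputable def decSet (a : ℕ → ℝ) : Set ℝ :=
  {0} ∪ {x : ℝ | ∃ k : ℕ, x = ∑' i : ℕ, a (k + i)}

/-- Length of the `j`-th closed interval (0-indexed, `j < 2 ^ k`) at step `k`
of the construction of the Cantor set associated to the gap sequence `a`:
it is the total length of all the gaps to be removed from that interval. -/
noncomputable def cantorLen (a : ℕ → ℝ) (k j : ℕ) : ℝ :=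
  ∑' m : ℕ, ∑ i ∈ Finset.range (2 ^ m), a (2 ^ (k + m) - 1 + 2 ^ m * j + i)

/-- Left endpoint of the `j`-th closed interval (0-indexed, `j < 2 ^ k`) at
step `k` of the construction of the Cantor set associated to `a`:  removing
from each step-`k` interval `I_j^k` the open gap of length `a (2 ^ k - 1 + j)`
produces the two step-`(k+1)` intervals `I_{2j}^{k+1}` and `I_{2j+1}^{k+1}`. -/
noncomputable def cantorLeft (a : ℕ → ℝ) : ℕ → ℕ → ℝ
  | 0, _ => 0
  | k + 1, j =>
    if j % 2 = 0 then cantorLeft a k (j / 2)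
    else cantorLeft a k (j / 2) + cantorLen a (k + 1) (j - 1) + a (2 ^ k - 1 + j / 2)

/-- The Cantor set `C_a` associated to the gap sequence `a`. -/
noncomputable def assocCantor (a : ℕ → ℝ) : Set ℝ :=
  ⋂ k : ℕ, ⋃ j ∈ Finset.range (2 ^ k),
    Set.Icc (cantorLeft a k j) (cantorLeft a k j + cantorLen a k j)

/-- `avgLen a n = s_n^{(a)} = 2 ^ (-n) ∑_{j ≥ 2 ^ n - 1} a j`, the average length of
the step-`n` intervals of `C_a` (with `a` 0-indexed, so this matches
`2^{-n} Σ_{j=2^n}^∞ a_j` for the 1-indexed sequence of the paper). -/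
noncomputable def avgLen (a : ℕ → ℝ) (n : ℕ) : ℝ :=
  (∑' j : ℕ, a (2 ^ n - 1 + j)) / 2 ^ n

/-- The gap sequence of the central Cantor set with ratio sequence `r`
(0-indexed): the gap `a i` has length `r 0 ⋯ r (n-1) * (1 - 2 * r n)` where
`2 ^ n - 1 ≤ i ≤ 2 ^ (n+1) - 2`, i.e. `n = log₂ (i + 1)`.  The central Cantor
set `C{r_j}` itself is `assocCantor (centralGaps r)`. -/
noncomputable def centralGaps (r : ℕ → ℝ) (i : ℕ) : ℝ :=
  (∏ j ∈ Finset.range (Nat.log 2 (i + 1)), r j) * (1 - 2 * r (Nat.log 2 (i + 1)))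

/-- A decreasing sequence `a` is doubling if `a n ≤ τ * a (2 * n)` (1-indexed)
for some constant `τ`; with 0-indexing this reads `a n ≤ τ * a (2 * n + 1)`. -/
def IsDoubling (a : ℕ → ℝ) : Prop :=
  ∃ τ : ℝ, ∀ n : ℕ, a n ≤ τ * a (2 * n + 1)

/-- A general sequence is doubling if its decreasing rearrangement is. -/
def IsDoublingGen (a : ℕ → ℝ) : Prop :=
  ∃ σ : Equiv.Perm ℕ, Antitone (a ∘ σ) ∧ IsDoubling (a ∘ σ)

/-!
Since the gaps fill `[0, L]` up to a null set, any two points of `E` at distance `> r` are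
separated by a gap of index `< m`, where `m ≈ log (1 / r)` is chosen so that the gaps of index
`≥ m` have total length `≤ c₂ λ^(m+1) / (1 - λ) ≤ r`. Sorting the points of `E ∩ B(x, R)` by the
number of such long gaps to their left gives a cover by balls of radius `r` whose number is one
more than the number of long gaps inside `B(x, R)`. A gap inside `B(x, R)` has length `≤ 2R`,
so its index is `≳ log (1 / R)`, and the geometric bounds leave only `O(log (R / r))` indices.
Hence `N_r(B(x, R) ∩ E) = O(log (R / r)) = O((R / r)^α)` for every `α > 0`.
-/

open Metric MeasureTheory Filter Finset

lemma coverNum_le_card {r : ℝ} {F : Set ℝ} {T : Finset ℝ}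
    (h : F ⊆ ⋃ x ∈ T, closedBall x r) : coverNum r F ≤ T.card :=
  Nat.sInf_le ⟨T, rfl, h⟩

lemma one_le_coverNum {r : ℝ} {F : Set ℝ} (hF : F.Nonempty) (hb : Bornology.IsBounded F)
    (hr : 0 < r) : 1 ≤ coverNum r F := by
  obtain ⟨t, ht, hcov⟩ := totallyBounded_iff.1
    (hb.isCompact_closure.totallyBounded.subset subset_closure) r hr
  rw [Nat.one_le_iff_ne_zero, coverNum, Ne, Nat.sInf_eq_zero, not_or]
  constructor
  · rintro ⟨S, hS, hFS⟩
    obtain ⟨x, hx⟩ := hF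
    simpa [Finset.card_eq_zero.1 hS] using hFS hx
  · refine Set.nonempty_iff_ne_empty.1 ⟨_, ht.toFinset, rfl, hcov.trans ?_⟩
    simpa using Set.iUnion₂_mono fun y _ => ball_subset_closedBall

lemma coverNum_le_of_fiber_dist_le {r : ℝ} {F : Set ℝ} (g : ℝ → ℕ) {N : ℕ}
    (hg : ∀ y ∈ F, g y ≤ N) (hfib : ∀ y ∈ F, ∀ z ∈ F, g y = g z → dist y z ≤ r) :
    coverNum r F ≤ N + 1 := by
  classical
  refine (coverNum_le_card (T := (range (N + 1)).image (Function.invFunOn g F)) ?_).trans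
    (card_image_le.trans (card_range _).le)
  intro y hy
  have hex : ∃ z ∈ F, g z = g y := ⟨y, hy, rfl⟩
  refine Set.mem_iUnion₂.2 ⟨_, mem_image_of_mem _ (mem_range.2 (Nat.lt_succ_of_le (hg y hy))), ?_⟩
  exact hfib y hy _ (Function.invFunOn_mem hex) (Function.invFunOn_eq hex).symm

def IsAssouadExponent (F : Set ℝ) (α : ℝ) : Prop :=
  ∃ c > (0 : ℝ), ∃ ρ > (0 : ℝ), ∀ x ∈ F, ∀ r R : ℝ, 0 < r → r < R → R < ρ →
    (coverNum r (closedBall x R ∩ F) : ℝ) ≤ c * (R / r) ^ α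

lemma IsAssouadExponent.nonneg {F : Set ℝ} {α : ℝ} (hF : F.Nonempty)
    (h : IsAssouadExponent F α) : 0 ≤ α := by
  obtain ⟨c, -, ρ, hρ, H⟩ := h
  obtain ⟨x, hx⟩ := hF
  by_contra! hα
  have hsmall : Tendsto (fun t : ℝ => c * t ^ α) atTop (nhds (c * 0)) := by
    simpa using (tendsto_rpow_neg_atTop (neg_pos.2 hα)).const_mul c
  obtain ⟨t, ht1, htc⟩ :=
    ((eventually_gt_atTop 1).and (hsmall.eventually (gt_mem_nhds (show c * 0 < 1 by simp)))).exists
  have hR : 0 < ρ / 2 := half_pos hρ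
  have hcov := H x hx (ρ / 2 / t) (ρ / 2) (by positivity) (div_lt_self hR ht1) (half_lt_self hρ)
  rw [div_div_cancel₀ hR.ne'] at hcov
  have hone := one_le_coverNum (r := ρ / 2 / t) (F := closedBall x (ρ / 2) ∩ F)
    ⟨x, mem_closedBall_self hR.le, hx⟩ (isBounded_closedBall.subset Set.inter_subset_left)
    (by positivity)
  have : (1 : ℝ) ≤ coverNum (ρ / 2 / t) (closedBall x (ρ / 2) ∩ F) := by exact_mod_cast hone
  linarith

lemma isAssouadExponent_of_coverNum_le_log {F : Set ℝ} {C K ρ α : ℝ} (hC : 0 ≤ C) (hρ : 0 < ρ)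
    (hα : 0 < α)
    (h : ∀ x ∈ F, ∀ r R : ℝ, 0 < r → r < R → R < ρ →
      (coverNum r (closedBall x R ∩ F) : ℝ) ≤ C * Real.log (R / r) + K) :
    IsAssouadExponent F α := by
  have hc : 0 < C / α + |K| + 1 := by
    have := div_nonneg hC hα.le
    positivity
  refine ⟨C / α + |K| + 1, hc, ρ, hρ, fun x hx r R hr hrR hRρ => ?_⟩
  have hpow : 1 ≤ (R / r) ^ α := Real.one_le_rpow ((one_le_div hr).2 hrR.le) hα.le
  calc (coverNum r (closedBall x R ∩ F) : ℝ) ≤ C * Real.log (R / r) + K := h x hx r R hr hrR hRρ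
    _ ≤ C * ((R / r) ^ α / α) + |K| * (R / r) ^ α := by
      gcongr
      · exact Real.log_le_rpow_div (div_pos (hr.trans hrR) hr).le hα
      · exact (le_abs_self K).trans (le_mul_of_one_le_right (abs_nonneg K) hpow)
    _ ≤ (C / α + |K| + 1) * (R / r) ^ α := by
      rw [← mul_div_assoc, mul_div_right_comm, add_mul, add_mul, one_mul]
      linarith

lemma dimA_eq_zero_of_forall_isAssouadExponent {F : Set ℝ} (hF : F.Nonempty)
    (h : ∀ α > 0, IsAssouadExponent F α) : dimA F = 0 := by
  change sInf {α | IsAssouadExponent F α} = 0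
  have hbdd : BddBelow {α | IsAssouadExponent F α} := ⟨0, fun α hα => hα.nonneg hF⟩
  refine le_antisymm ?_ (le_csInf ⟨1, h 1 one_pos⟩ fun α hα => hα.nonneg hF)
  by_contra! hpos
  linarith [csInf_le hbdd (h _ (half_pos hpos))]

lemma Set.Ioo_subset_Ioo_of_inter_nonempty {α : Type*} [LinearOrder α] {p q y z : α}
    (h : (Set.Ioo p q ∩ Set.Ioo y z).Nonempty) (hy : y ∉ Set.Ioo p q) (hz : z ∉ Set.Ioo p q) :
    Set.Ioo p q ⊆ Set.Ioo y z := by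
  obtain ⟨w, ⟨hpw, hwq⟩, hyw, hwz⟩ := h
  refine Set.Ioo_subset_Ioo ?_ ?_
  · by_contra! hpy
    exact hy ⟨hpy, hyw.trans hwq⟩
  · by_contra! hzq
    exact hz ⟨hpw.trans hwz, hzq⟩

section ComplementarySet

variable {a : ℕ → ℝ} {U : ℕ → Set ℝ}

lemma volume_Icc_diff_iUnion_eq_zero (ha : Summable a)
    (hU : ∀ n, ∃ p q : ℝ, p < q ∧ q - p = a n ∧ U n = Set.Ioo p q)
    (hUsub : ∀ n, U n ⊆ Set.Icc 0 (∑' i, a i)) (hdisj : Pairwise (Function.onFun Disjoint U)) :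
    volume (Set.Icc 0 (∑' i, a i) \ ⋃ n, U n) = 0 := by
  choose p q hpq hlen hUeq using hU
  have hvol : volume (⋃ n, U n) = ENNReal.ofReal (∑' i, a i) := by
    rw [measure_iUnion hdisj fun n => hUeq n ▸ measurableSet_Ioo,
      ENNReal.ofReal_tsum_of_nonneg (fun n => by linarith [hpq n, hlen n]) ha]
    simp_rw [hUeq, Real.volume_Ioo, hlen]
  rw [measure_sdiff (Set.iUnion_subset hUsub) (MeasurableSet.iUnion fun n =>
      hUeq n ▸ measurableSet_Ioo).nullMeasurableSet (hvol ▸ ENNReal.ofReal_ne_top),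
    hvol, Real.volume_Icc, sub_zero, tsub_self]

lemma exists_lt_subset_Ioo_of_tsum_lt (ha : Summable a)
    (hU : ∀ n, ∃ p q : ℝ, p < q ∧ q - p = a n ∧ U n = Set.Ioo p q) {y z : ℝ} {m : ℕ}
    (hy : ∀ n, y ∉ U n) (hz : ∀ n, z ∉ U n) (hnull : volume (Set.Ioo y z \ ⋃ n, U n) = 0)
    (htail : ∑' i, a (i + m) < z - y) : ∃ n < m, U n ⊆ Set.Ioo y z := by
  choose p q hpq hlen hUeq using hU
  have ha0 : ∀ n, 0 ≤ a n := fun n => by linarith [hpq n, hlen n]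
  by_contra! hnot
  have hcover : Set.Ioo y z ⊆ (⋃ i, U (i + m)) ∪ (Set.Ioo y z \ ⋃ n, U n) := by
    intro w hw
    by_cases hwU : w ∈ ⋃ n, U n
    · obtain ⟨n, hn⟩ := Set.mem_iUnion.1 hwU
      have hmn : m ≤ n := by
        by_contra! hnm
        refine hnot n hnm ?_
        have hyn := hy n
        have hzn := hz n
        rw [hUeq n] at hn hyn hzn ⊢
        exact Set.Ioo_subset_Ioo_of_inter_nonempty ⟨w, hn, hw⟩ hyn hzn
      exact Or.inl (Set.mem_iUnion.2 ⟨n - m, by rwa [Nat.sub_add_cancel hmn]⟩)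
    · exact Or.inr ⟨hw, hwU⟩
  have hle : ENNReal.ofReal (z - y) ≤ ENNReal.ofReal (∑' i, a (i + m)) :=
    calc ENNReal.ofReal (z - y) = volume (Set.Ioo y z) := Real.volume_Ioo.symm
      _ ≤ volume (⋃ i, U (i + m)) + volume (Set.Ioo y z \ ⋃ n, U n) :=
        (measure_mono hcover).trans (measure_union_le _ _)
      _ ≤ ∑' i, volume (U (i + m)) := by rw [hnull, add_zero]; exact measure_iUnion_le _
      _ = ENNReal.ofReal (∑' i, a (i + m)) := by
        rw [ENNReal.ofReal_tsum_of_nonneg (fun i => ha0 _) ((summable_nat_add_iff m).2 ha)]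
        simp_rw [hUeq, Real.volume_Ioo, hlen]
  linarith [(ENNReal.ofReal_le_ofReal_iff (tsum_nonneg fun i => ha0 (i + m))).1 hle]

lemma IsComplementarySet.zero_mem {E : Set ℝ} (hE : IsComplementarySet a E) : (0 : ℝ) ∈ E := by
  obtain ⟨U, hU, hUsub, -, rfl⟩ := hE
  have ha0 : ∀ n, 0 ≤ a n := fun n => by
    obtain ⟨p, q, hpq, hlen, -⟩ := hU n
    linarith
  refine ⟨⟨le_rfl, tsum_nonneg ha0⟩, fun h0 => ?_⟩
  obtain ⟨n, hn⟩ := Set.mem_iUnion.1 h0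
  obtain ⟨p, q, -, -, hUn⟩ := hU n
  rw [hUn] at hn
  obtain ⟨hp0, hq0⟩ := hn
  have hp : p / 2 ∈ U n := by
    rw [hUn]
    exact ⟨by linarith, by linarith⟩
  linarith [(hUsub n hp).1]

lemma IsComplementarySet.coverNum_closedBall_inter_le {E : Set ℝ} {m : ℕ} {r : ℝ}
    (ha : Summable a) (hE : IsComplementarySet a E) (hm : ∑' i, a (i + m) ≤ r) (x R : ℝ) :
    coverNum r (closedBall x R ∩ E) ≤ #{n ∈ range m | a n ≤ 2 * R} + 1 := by
  classical
  obtain ⟨U, hU, hUsub, hdisj, rfl⟩ := hE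
  have hnull := volume_Icc_diff_iUnion_eq_zero ha hU hUsub hdisj
  set L := ∑' i, a i
  set F := closedBall x R ∩ (Set.Icc 0 L \ ⋃ n, U n)
  -- Points of `E` more than `r` apart are separated by a gap of index `< m`, so the fibres of
  -- `g` (the number of such gaps between `x - R` and `w`) have diameter `≤ r`.
  let g : ℝ → ℕ := fun w => #{n ∈ range m | U n ⊆ Set.Ioo (x - R) w}
  have hball : ∀ w ∈ F, x - R ≤ w ∧ w ≤ x + R := fun w hw => by
    have := abs_le.1 (Real.dist_eq w x ▸ mem_closedBall.1 hw.1)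
    constructor <;> linarith [this.1, this.2]
  have hlt : ∀ y ∈ F, ∀ z ∈ F, r < z - y → g y < g z := by
    intro y hy z hz hyz
    have hnot : ∀ w ∈ F, ∀ n, w ∉ U n := fun w hw n hn => hw.2.2 (Set.mem_iUnion_of_mem n hn)
    have hnullyz : volume (Set.Ioo y z \ ⋃ n, U n) = 0 :=
      measure_mono_null (Set.sdiff_subset_sdiff_left (Set.Ioo_subset_Icc_self.trans
        (Set.Icc_subset_Icc hy.2.1.1 hz.2.1.2))) hnull
    obtain ⟨n, hnm, hnyz⟩ := exists_lt_subset_Ioo_of_tsum_lt ha hU (hnot y hy) (hnot z hz)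
      hnullyz (by linarith)
    obtain ⟨p, q, hpq, -, hUn⟩ := hU n
    have hw : (p + q) / 2 ∈ U n := hUn ▸ ⟨by linarith, by linarith⟩
    refine card_lt_card ((Finset.ssubset_iff_of_subset (monotone_filter_right _ fun k _ hk =>
      hk.trans (Set.Ioo_subset_Ioo_right (by linarith [(hnyz hw).1, (hnyz hw).2])))).2
        ⟨n, ?_, ?_⟩)
    · exact mem_filter.2 ⟨mem_range.2 hnm,
        hnyz.trans (Set.Ioo_subset_Ioo_left (hball y hy).1)⟩
    · intro hn
      linarith [((mem_filter.1 hn).2 hw).2, (hnyz hw).1]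
  refine coverNum_le_of_fiber_dist_le g (fun w hw => card_le_card (monotone_filter_right _ ?_))
    fun y hy z hz hgyz => ?_
  · intro n _ hn
    obtain ⟨p, q, hpq, hlen, hUn⟩ := hU n
    rw [hUn, Set.Ioo_subset_Ioo_iff hpq] at hn
    linarith [hball w hw]
  · by_contra! hyz
    rcases lt_abs.1 (Real.dist_eq y z ▸ hyz) with h | h
    · exact (hlt z hz y hy h).ne' hgyz
    · exact (hlt y hy z hz (by linarith)).ne hgyz

end ComplementarySet

lemma card_le_of_forall_sub_le {S : Finset ℕ} {D : ℝ} (hD : 0 ≤ D)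
    (h : ∀ n ∈ S, ∀ n' ∈ S, (n : ℝ) - n' ≤ D) : (#S : ℝ) ≤ D + 1 := by
  rcases S.eq_empty_or_nonempty with rfl | hS
  · simp only [Finset.card_empty, Nat.cast_zero]
    linarith
  set n₀ := S.min' hS
  have hsub : S ⊆ Icc n₀ (n₀ + ⌊D⌋₊) := fun n hn => by
    have hn₀ := S.min'_le n hn
    have hfloor : n - n₀ ≤ ⌊D⌋₊ :=
      Nat.le_floor (by rw [Nat.cast_sub hn₀]; exact h n hn n₀ (S.min'_mem hS))
    exact mem_Icc.2 ⟨hn₀, by omega⟩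
  calc (#S : ℝ) ≤ #(Icc n₀ (n₀ + ⌊D⌋₊)) := by exact_mod_cast Finset.card_le_card hsub
    _ = ⌊D⌋₊ + 1 := by rw [Nat.card_Icc]; norm_cast; omega
    _ ≤ D + 1 := by linarith [Nat.floor_le hD]

lemma card_le_log_div_log_inv_add_one {S : Finset ℕ} {lam u v : ℝ} (hlam0 : 0 < lam)
    (hlam : lam < 1) (hu : 0 < u) (huv : u ≤ v) (hS : ∀ n ∈ S, u ≤ lam ^ n ∧ lam ^ n ≤ v) :
    (#S : ℝ) ≤ Real.log (v / u) / Real.log lam⁻¹ + 1 := by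
  have hloglam : 0 < Real.log lam⁻¹ := Real.log_pos ((one_lt_inv₀ hlam0).2 hlam)
  refine card_le_of_forall_sub_le (div_nonneg (Real.log_nonneg ((one_le_div hu).2 huv))
    hloglam.le) fun n hn n' hn' => ?_
  have hn := Real.log_le_log hu (hS n hn).1
  have hn' := Real.log_le_log (pow_pos hlam0 n') (hS n' hn').2
  rw [Real.log_pow] at hn hn'
  rw [le_div_iff₀ hloglam, Real.log_inv, Real.log_div (hu.trans_le huv).ne' hu.ne']
  linarith

section GeometricBounds

variable {a : ℕ → ℝ} {c₁ c₂ lam : ℝ}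

lemma tsum_nat_add_le_of_le_geometric {c : ℝ} (ha0 : ∀ n, 0 ≤ a n) (hlam0 : 0 ≤ lam)
    (hlam : lam < 1) (h : ∀ j, a j ≤ c * lam ^ (j + 1)) (m : ℕ) :
    ∑' i, a (i + m) ≤ c * lam ^ (m + 1) / (1 - lam) := by
  have hgeom := (summable_geometric_of_lt_one hlam0 hlam).mul_left (c * lam ^ (m + 1))
  have hle : ∀ i, a (i + m) ≤ c * lam ^ (m + 1) * lam ^ i := fun i =>
    (h (i + m)).trans_eq (by ring)
  calc ∑' i, a (i + m) ≤ ∑' i, c * lam ^ (m + 1) * lam ^ i :=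
        (hgeom.of_nonneg_of_le (fun i => ha0 _) hle).tsum_le_tsum hle hgeom
    _ = c * lam ^ (m + 1) / (1 - lam) := by
      rw [tsum_mul_left, tsum_geometric_of_lt_one hlam0 hlam, div_eq_mul_inv]

lemma exists_mul_pow_succ_div_le (c : ℝ) (hlam0 : 0 ≤ lam) (hlam : lam < 1) {r : ℝ}
    (hr : 0 < r) : ∃ m : ℕ, c * lam ^ (m + 1) / (1 - lam) ≤ r := by
  have hlim : Tendsto (fun m : ℕ => c * lam ^ (m + 1) / (1 - lam)) atTop (nhds 0) := by
    simpa using (((tendsto_pow_atTop_nhds_zero_of_lt_one hlam0 hlam).comp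
      (tendsto_add_atTop_nat 1)).const_mul c).div_const (1 - lam)
  exact ((hlim.eventually (gt_mem_nhds hr)).exists).imp fun m hm => hm.le

lemma card_filter_range_le_log_of_geometric_bounds {m : ℕ} (hc₁ : 0 < c₁) (hc₂ : 0 < c₂)
    (hlam0 : 0 < lam) (hlam : lam < 1)
    (hbound : ∀ j : ℕ, c₁ * lam ^ (j + 1) ≤ a j ∧ a j ≤ c₂ * lam ^ (j + 1)) {r R : ℝ}
    (hr : 0 < r) (hrR : r < R) (hm : ∀ n < m, r < c₂ * lam ^ (n + 1) / (1 - lam)) :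
    (#{n ∈ range m | a n ≤ 2 * R} : ℝ) ≤ (Real.log lam⁻¹)⁻¹ * Real.log (R / r) +
      (Real.log (2 * c₂ / (c₁ * (1 - lam))) / Real.log lam⁻¹ + 1) := by
  have h1lam : 0 < 1 - lam := by linarith
  have hc : c₁ ≤ c₂ := le_of_mul_le_mul_right ((hbound 0).1.trans (hbound 0).2) (pow_pos hlam0 1)
  have hS : ∀ n ∈ ({n ∈ range m | a n ≤ 2 * R} : Finset ℕ),
      r * (1 - lam) / (c₂ * lam) ≤ lam ^ n ∧ lam ^ n ≤ 2 * R / (c₁ * lam) := by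
    intro n hn
    obtain ⟨hnm, han⟩ := mem_filter.1 hn
    have hlong := hm n (mem_range.1 hnm)
    have hlow := (hbound n).1
    rw [lt_div_iff₀ h1lam, pow_succ] at hlong
    rw [pow_succ] at hlow
    constructor
    · rw [div_le_iff₀ (by positivity)]
      linarith
    · rw [le_div_iff₀ (by positivity)]
      linarith
  have huv : r * (1 - lam) / (c₂ * lam) ≤ 2 * R / (c₁ * lam) :=
    div_le_div₀ (by linarith) (by nlinarith) (by positivity)
      (mul_le_mul_of_nonneg_right hc hlam0.le)
  have hvu : 2 * R / (c₁ * lam) / (r * (1 - lam) / (c₂ * lam)) =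
      R / r * (2 * c₂ / (c₁ * (1 - lam))) := by
    field_simp
  have hcard := card_le_log_div_log_inv_add_one hlam0 hlam (by positivity) huv hS
  rwa [hvu, Real.log_mul (div_pos (hr.trans hrR) hr).ne' (div_pos (by positivity)
    (mul_pos hc₁ h1lam)).ne', add_div, div_eq_inv_mul (Real.log (R / r)), add_assoc] at hcard

lemma IsComplementarySet.coverNum_le_log_of_geometric_bounds {E : Set ℝ}
    (ha0 : ∀ n, 0 ≤ a n) (hc₁ : 0 < c₁) (hc₂ : 0 < c₂) (hlam0 : 0 < lam) (hlam : lam < 1)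
    (hbound : ∀ j : ℕ, c₁ * lam ^ (j + 1) ≤ a j ∧ a j ≤ c₂ * lam ^ (j + 1))
    (hE : IsComplementarySet a E) (x : ℝ) {r R : ℝ} (hr : 0 < r) (hrR : r < R) :
    (coverNum r (closedBall x R ∩ E) : ℝ) ≤ (Real.log lam⁻¹)⁻¹ * Real.log (R / r) +
      (Real.log (2 * c₂ / (c₁ * (1 - lam))) / Real.log lam⁻¹ + 2) := by
  classical
  have ha : Summable a := ((summable_geometric_of_lt_one hlam0.le hlam).mul_left
    (c₂ * lam)).of_nonneg_of_le ha0 fun j => (hbound j).2.trans_eq (by ring)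
  have hex := exists_mul_pow_succ_div_le c₂ hlam0.le hlam hr
  have hcover : (coverNum r (closedBall x R ∩ E) : ℝ) ≤
      #{n ∈ range (Nat.find hex) | a n ≤ 2 * R} + 1 := by
    exact_mod_cast hE.coverNum_closedBall_inter_le ha ((tsum_nat_add_le_of_le_geometric ha0
      hlam0.le hlam (fun j => (hbound j).2) _).trans (Nat.find_spec hex)) x R
  have hcard := card_filter_range_le_log_of_geometric_bounds hc₁ hc₂ hlam0 hlam hbound hr hrR
    fun n hn => not_le.1 (Nat.find_min hex hn)
  linarith

end GeometricBounds

theorem dimA_eq_zero_of_geometric_bounds_general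
    (a : ℕ → ℝ) (hpos : ∀ n, 0 < a n)
    (c₁ c₂ lam : ℝ) (hc₁ : 0 < c₁) (hc₂ : 0 < c₂) (hlam0 : 0 < lam) (hlam : lam < 1)
    (hbound : ∀ j : ℕ, c₁ * lam ^ (j + 1) ≤ a j ∧ a j ≤ c₂ * lam ^ (j + 1))
    (E : Set ℝ) (hE : IsComplementarySet a E) :
    dimA E = 0 := by
  have hC : 0 ≤ (Real.log lam⁻¹)⁻¹ :=
    inv_nonneg.2 (Real.log_nonneg ((one_le_inv₀ hlam0).2 hlam.le))
  exact dimA_eq_zero_of_forall_isAssouadExponent ⟨0, hE.zero_mem⟩ fun α hα =>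
    isAssouadExponent_of_coverNum_le_log hC one_pos hα fun x _ r R hr hrR _ =>
      hE.coverNum_le_log_of_geometric_bounds (fun n => (hpos n).le) hc₁ hc₂ hlam0 hlam hbound
        x hr hrR

/-- if `c₁ λ^j ≤ a_j ≤ c₂ λ^j` (1-indexed) for positive
constants `c₁, c₂, λ` with `λ < 1`, then every complementary set of `a` has
Assouad dimension `0`. -/
theorem dimA_eq_zero_of_geometric_bounds
    (a : ℕ → ℝ) (hpos : ∀ n, 0 < a n) (hdec : Antitone a)
    (c₁ c₂ lam : ℝ) (hc₁ : 0 < c₁) (hc₂ : 0 < c₂) (hlam0 : 0 < lam) (hlam : lam < 1)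
    (hbound : ∀ j : ℕ, c₁ * lam ^ (j + 1) ≤ a j ∧ a j ≤ c₂ * lam ^ (j + 1))
    (E : Set ℝ) (hE : IsComplementarySet a E) :
    dimA E = 0 :=
  dimA_eq_zero_of_geometric_bounds_general a hpos c₁ c₂ lam hc₁ hc₂ hlam0 hlam hbound E hE
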